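/- Let k > 0 and α ∈ ℝ² with |αₙ| ≠ k for all n ∈ ℤ². There exists a constant C > 0, depending only on k and α, such that for every n ∈ ℤ² and every tangential vector Ẽₙ ∈ ℂ³ (e₃·Ẽₙ = 0), the symbol R̂ₙ = −(1/(iβₙ))[k²Ẽₙ − (αₙ·Ẽₙ)αₙ] satisfies (1+|αₙ|²)^{−1/2} ( |R̂ₙ|² + |αₙ×R̂ₙ|² ) ≤ C (1+|αₙ|²)^{−1/2} ( |Ẽₙ|² + |αₙ·Ẽₙ|² ). Consequently, R maps sequences with Σₙ(1+|αₙ|²)^{−1/2}(|Ẽₙ|²+|αₙ·Ẽₙ|²) < ∞ boundedly to sequences with Σₙ(1+|αₙ|²)^{−1/2}(|R̂ₙ|²+|αₙ×R̂ₙ|²) < ∞. -/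

import Mathlib

open scoped Real

/-- `|αₙ|` for `αₙ = (α₁+n₁, α₂+n₂, 0)`. -/
noncomputable def alphaNorm (α : ℝ × ℝ) (n : ℤ × ℤ) : ℝ :=
  Real.sqrt ((α.1 + (n.1 : ℝ))^2 + (α.2 + (n.2 : ℝ))^2)

/-- The vector `αₙ = (α₁+n₁, α₂+n₂, 0)` viewed in `ℂ³`. -/
noncomputable def alphaVec (α : ℝ × ℝ) (n : ℤ × ℤ) : Fin 3 → ℂ :=
  ![((α.1 + (n.1 : ℝ) : ℝ) : ℂ), ((α.2 + (n.2 : ℝ) : ℝ) : ℂ), 0]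

/-- The vertical wavenumbers `βₙ` of the Rayleigh expansion:
`βₙ = (k² − |αₙ|²)^{1/2}` if `|αₙ| < k` and `βₙ = i(|αₙ|² − k²)^{1/2}` if `|αₙ| > k`. -/
noncomputable def betaN (k : ℝ) (α : ℝ × ℝ) (n : ℤ × ℤ) : ℂ :=
  if alphaNorm α n < k then (Real.sqrt (k^2 - (alphaNorm α n)^2) : ℂ)
  else Complex.I * (Real.sqrt ((alphaNorm α n)^2 - k^2) : ℂ)

/-- Bilinear dot product on `ℂ³` (no conjugation). -/
def cdot (a b : Fin 3 → ℂ) : ℂ := a 0 * b 0 + a 1 * b 1 + a 2 * b 2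

/-- Hermitian pairing `a · conj b` on `ℂ³`. -/
noncomputable def hpair (a b : Fin 3 → ℂ) : ℂ := ∑ j : Fin 3, a j * (starRingEnd ℂ) (b j)

/-- Squared Euclidean norm `|v|² = Σⱼ|vⱼ|²` of `v ∈ ℂ³`. -/
noncomputable def enormSq (v : Fin 3 → ℂ) : ℝ := ∑ j : Fin 3, ‖v j‖^2

/-- The Fourier symbol `R̂ₙ = −(1/(iβₙ))[k²Ẽₙ − (αₙ·Ẽₙ)αₙ]` of the transparent
boundary (Dirichlet-to-Neumann) operator `R`. -/
noncomputable def Rsymb (k : ℝ) (α : ℝ × ℝ) (n : ℤ × ℤ) (En : Fin 3 → ℂ) : Fin 3 → ℂ :=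
  fun j => -(1 / (Complex.I * betaN k α n)) *
    ((k : ℂ)^2 * En j - cdot (alphaVec α n) En * alphaVec α n j)

/-- The Sobolev weight `(1+|αₙ|²)^{−1/2}`. -/
noncomputable def sw (α : ℝ × ℝ) (n : ℤ × ℤ) : ℝ := 1 / Real.sqrt (1 + (alphaNorm α n)^2)

/-- Bilinearly extended cross product on `ℂ³`. -/
def ccross (a b : Fin 3 → ℂ) : Fin 3 → ℂ :=
  ![a 1 * b 2 - a 2 * b 1, a 2 * b 0 - a 0 * b 2, a 0 * b 1 - a 1 * b 0]

/-!
With `a = αₙ` and `E` tangential, `R̂ₙ = -(iβₙ)⁻¹ (k²E - (a·E) a)` and, since `a × a = 0`,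
`a × R̂ₙ = -(iβₙ)⁻¹ k² (a × E)`; hence `|βₙ|² (|R̂ₙ|² + |a × R̂ₙ|²)` is at most
`(2k⁴ + 2)(1 + |a|²)(|E|² + |a·E|²)`. Away from Wood anomalies `βₙ` never vanishes, and
`|βₙ|² = |αₙ|² - k²` for all but finitely many `n`, so `(1 + |αₙ|²) / |βₙ|²` is bounded
uniformly in `n`. Summing the resulting modewise bound gives the continuity of `R`.
-/

open Filter

lemma tendsto_alphaNorm_cofinite_atTop (α : ℝ × ℝ) : Tendsto (alphaNorm α) cofinite atTop := by
  have hcast : Tendsto (fun n : ℤ × ℤ => ((n.1 : ℝ), (n.2 : ℝ))) cofinite (cocompact (ℝ × ℝ)) := by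
    rw [← coprod_cofinite, ← coprod_cocompact]
    exact Int.tendsto_coe_cofinite.prodMap_coprod Int.tendsto_coe_cofinite
  have hshift := Tendsto.comp (Homeomorph.addLeft α).map_cocompact.le hcast
  refine tendsto_atTop_mono (fun n => ?_) (tendsto_norm_cocompact_atTop.comp hshift)
  simp only [Function.comp_apply, Homeomorph.coe_addLeft, Prod.norm_def, Prod.fst_add,
    Prod.snd_add, Real.norm_eq_abs, alphaNorm]
  exact max_le (Real.abs_le_sqrt (by nlinarith)) (Real.abs_le_sqrt (by nlinarith))

section Beta

variable {k : ℝ} {α : ℝ × ℝ} {n : ℤ × ℤ}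

lemma norm_betaN_sq_of_le (hk : 0 ≤ k) (h : k ≤ alphaNorm α n) :
    ‖betaN k α n‖ ^ 2 = alphaNorm α n ^ 2 - k ^ 2 := by
  rw [betaN, if_neg h.not_gt, norm_mul, Complex.norm_I, one_mul, Complex.norm_real,
    Real.norm_eq_abs, sq_abs, Real.sq_sqrt (by nlinarith)]

lemma betaN_ne_zero (hk : 0 < k) (h : alphaNorm α n ≠ k) : betaN k α n ≠ 0 := by
  have ht : 0 ≤ alphaNorm α n := Real.sqrt_nonneg _
  rw [betaN]
  split_ifs with hlt
  · exact Complex.ofReal_ne_zero.2 (Real.sqrt_ne_zero'.2 (by nlinarith))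
  · have hgt : k < alphaNorm α n := lt_of_le_of_ne (not_lt.1 hlt) h.symm
    exact mul_ne_zero Complex.I_ne_zero
      (Complex.ofReal_ne_zero.2 (Real.sqrt_ne_zero'.2 (by nlinarith)))

lemma exists_one_add_alphaNorm_sq_le_mul_norm_betaN_sq (hk : 0 < k)
    (hwood : ∀ n : ℤ × ℤ, alphaNorm α n ≠ k) :
    ∃ M : ℝ, 0 < M ∧ ∀ n, 1 + alphaNorm α n ^ 2 ≤ M * ‖betaN k α n‖ ^ 2 := by
  have hfar : ∀ᶠ n in cofinite, (1 + alphaNorm α n ^ 2) / ‖betaN k α n‖ ^ 2 ≤ 2 := by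
    filter_upwards [(tendsto_alphaNorm_cofinite_atTop α).eventually_ge_atTop (2 * k + 1)] with n hn
    rw [norm_betaN_sq_of_le hk.le (by linarith), div_le_iff₀ (by nlinarith)]
    nlinarith
  obtain ⟨M, hM⟩ := (isBoundedUnder_of_eventually_le hfar).bddAbove_range_of_cofinite
  refine ⟨max M 1, by positivity, fun n => ?_⟩
  have hβ : 0 < ‖betaN k α n‖ ^ 2 := by have := betaN_ne_zero hk (hwood n); positivity
  rw [← div_le_iff₀ hβ]
  exact (hM ⟨n, rfl⟩).trans (le_max_left M 1)

end Beta

lemma enormSq_nonneg (v : Fin 3 → ℂ) : 0 ≤ enormSq v :=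
  Finset.sum_nonneg fun _ _ => sq_nonneg _

lemma enormSq_smul (c : ℂ) (v : Fin 3 → ℂ) : enormSq (c • v) = ‖c‖ ^ 2 * enormSq v := by
  simp only [enormSq, Pi.smul_apply, smul_eq_mul, norm_mul, mul_pow, Finset.mul_sum]

lemma enormSq_sub_le (u v : Fin 3 → ℂ) : enormSq (u - v) ≤ 2 * enormSq u + 2 * enormSq v := by
  rw [enormSq, enormSq, enormSq, Finset.mul_sum, Finset.mul_sum, ← Finset.sum_add_distrib]
  gcongr with j
  calc ‖(u - v) j‖ ^ 2 ≤ (‖u j‖ + ‖v j‖) ^ 2 := by gcongr; exact norm_sub_le _ _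
    _ ≤ 2 * ‖u j‖ ^ 2 + 2 * ‖v j‖ ^ 2 := by linarith [add_sq_le (a := ‖u j‖) (b := ‖v j‖)]

lemma ccross_smul_right (a : Fin 3 → ℂ) (c : ℂ) (v : Fin 3 → ℂ) :
    ccross a (c • v) = c • ccross a v := by
  ext j; fin_cases j <;> simp [ccross] <;> ring

lemma ccross_sub_right (a u v : Fin 3 → ℂ) : ccross a (u - v) = ccross a u - ccross a v := by
  ext j; fin_cases j <;> simp [ccross] <;> ring

lemma ccross_self (a : Fin 3 → ℂ) : ccross a a = 0 := by
  ext j; fin_cases j <;> simp [ccross] <;> ring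

lemma norm_mul_sub_mul_sq_le {R : Type*} [SeminormedRing R] (a b c d : R) :
    ‖a * d - b * c‖ ^ 2 ≤ (‖a‖ ^ 2 + ‖b‖ ^ 2) * (‖c‖ ^ 2 + ‖d‖ ^ 2) := by
  have h : ‖a * d - b * c‖ ≤ ‖a‖ * ‖d‖ + ‖b‖ * ‖c‖ :=
    (norm_sub_le _ _).trans (add_le_add (norm_mul_le _ _) (norm_mul_le _ _))
  calc ‖a * d - b * c‖ ^ 2 ≤ (‖a‖ * ‖d‖ + ‖b‖ * ‖c‖) ^ 2 := by gcongr
    _ ≤ _ := by nlinarith [sq_nonneg (‖a‖ * ‖c‖ - ‖b‖ * ‖d‖)]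

lemma enormSq_ccross_le {a b : Fin 3 → ℂ} (ha : a 2 = 0) (hb : b 2 = 0) :
    enormSq (ccross a b) ≤ enormSq a * enormSq b := by
  simpa [enormSq, Fin.sum_univ_three, ccross, ha, hb] using
    norm_mul_sub_mul_sq_le (a 0) (a 1) (b 0) (b 1)

lemma enormSq_add_enormSq_ccross_le {a E : Fin 3 → ℂ} (ha : a 2 = 0) (hE : E 2 = 0) (c K : ℂ) :
    enormSq (c • (K • E - cdot a E • a)) + enormSq (ccross a (c • (K • E - cdot a E • a)))
      ≤ ‖c‖ ^ 2 * ((2 * ‖K‖ ^ 2 + 2) * (1 + enormSq a) * (enormSq E + ‖cdot a E‖ ^ 2)) := by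
  rw [ccross_smul_right, ccross_sub_right, ccross_smul_right, ccross_smul_right, ccross_self,
    smul_zero, sub_zero, enormSq_smul, enormSq_smul, enormSq_smul, ← mul_add]
  have hsub := enormSq_sub_le (K • E) (cdot a E • a)
  rw [enormSq_smul, enormSq_smul] at hsub
  have hcross := enormSq_ccross_le ha hE
  have hA := enormSq_nonneg a
  have hEn := enormSq_nonneg E
  gcongr
  nlinarith [mul_nonneg (sq_nonneg ‖K‖) (mul_nonneg hA hEn), mul_nonneg (sq_nonneg ‖K‖) hA,
    mul_nonneg (sq_nonneg ‖cdot a E‖) hA, mul_nonneg (sq_nonneg ‖K‖) (sq_nonneg ‖cdot a E‖),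
    mul_le_mul_of_nonneg_left hcross (sq_nonneg ‖K‖)]

lemma enormSq_alphaVec (α : ℝ × ℝ) (n : ℤ × ℤ) : enormSq (alphaVec α n) = alphaNorm α n ^ 2 := by
  rw [enormSq, Fin.sum_univ_three, alphaNorm, Real.sq_sqrt (by positivity)]
  show ‖((α.1 + n.1 : ℝ) : ℂ)‖ ^ 2 + ‖((α.2 + n.2 : ℝ) : ℂ)‖ ^ 2 + ‖(0 : ℂ)‖ ^ 2 = _
  rw [Complex.norm_real, Complex.norm_real, Real.norm_eq_abs, Real.norm_eq_abs, sq_abs, sq_abs,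
    norm_zero]
  ring

lemma Rsymb_eq_smul (k : ℝ) (α : ℝ × ℝ) (n : ℤ × ℤ) (En : Fin 3 → ℂ) :
    Rsymb k α n En = (-(Complex.I * betaN k α n)⁻¹) •
      (((k : ℂ) ^ 2) • En - cdot (alphaVec α n) En • alphaVec α n) := by
  ext j; simp [Rsymb]

lemma norm_betaN_sq_mul_enormSq_Rsymb_le {k : ℝ} {α : ℝ × ℝ} {n : ℤ × ℤ} {En : Fin 3 → ℂ}
    (hE : En 2 = 0) :
    ‖betaN k α n‖ ^ 2 *
        (enormSq (Rsymb k α n En) + enormSq (ccross (alphaVec α n) (Rsymb k α n En)))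
      ≤ (2 * k ^ 4 + 2) * (1 + alphaNorm α n ^ 2) *
          (enormSq En + ‖cdot (alphaVec α n) En‖ ^ 2) := by
  have h := enormSq_add_enormSq_ccross_le (a := alphaVec α n) rfl hE
    (-(Complex.I * betaN k α n)⁻¹) ((k : ℂ) ^ 2)
  rw [← Rsymb_eq_smul, enormSq_alphaVec, norm_neg, norm_inv, norm_mul, Complex.norm_I, one_mul,
    norm_pow, Complex.norm_real, Real.norm_eq_abs, sq_abs, inv_pow, ← pow_mul] at h
  have hX : 0 ≤ (2 * k ^ 4 + 2) * (1 + alphaNorm α n ^ 2) *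
      (enormSq En + ‖cdot (alphaVec α n) En‖ ^ 2) := by
    have := enormSq_nonneg En; positivity
  calc _ ≤ ‖betaN k α n‖ ^ 2 * ((‖betaN k α n‖ ^ 2)⁻¹ * ((2 * k ^ 4 + 2) *
        (1 + alphaNorm α n ^ 2) * (enormSq En + ‖cdot (alphaVec α n) En‖ ^ 2))) := by gcongr
    _ ≤ _ := by rw [← mul_assoc]; exact mul_le_of_le_one_left hX mul_inv_le_one

lemma enormSq_Rsymb_add_enormSq_ccross_le {k M : ℝ} {α : ℝ × ℝ} {n : ℤ × ℤ} {En : Fin 3 → ℂ}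
    (hβ : betaN k α n ≠ 0) (hM : 1 + alphaNorm α n ^ 2 ≤ M * ‖betaN k α n‖ ^ 2) (hE : En 2 = 0) :
    enormSq (Rsymb k α n En) + enormSq (ccross (alphaVec α n) (Rsymb k α n En))
      ≤ M * (2 * k ^ 4 + 2) * (enormSq En + ‖cdot (alphaVec α n) En‖ ^ 2) := by
  have hS : 0 ≤ enormSq En + ‖cdot (alphaVec α n) En‖ ^ 2 := by
    have := enormSq_nonneg En; positivity
  refine le_of_mul_le_mul_left ((norm_betaN_sq_mul_enormSq_Rsymb_le hE).trans ?_) (by positivity)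
  calc (2 * k ^ 4 + 2) * (1 + alphaNorm α n ^ 2) * (enormSq En + ‖cdot (alphaVec α n) En‖ ^ 2)
      ≤ (2 * k ^ 4 + 2) * (M * ‖betaN k α n‖ ^ 2) *
          (enormSq En + ‖cdot (alphaVec α n) En‖ ^ 2) := by
        gcongr
    _ = _ := by ring

lemma sw_nonneg (α : ℝ × ℝ) (n : ℤ × ℤ) : 0 ≤ sw α n := by
  unfold sw; positivity

lemma summable_and_tsum_le_mul_of_le {ι : Type*} {f g : ι → ℝ} {C : ℝ} (hf : ∀ i, 0 ≤ f i)
    (hfg : ∀ i, f i ≤ C * g i) (hg : Summable g) : Summable f ∧ ∑' i, f i ≤ C * ∑' i, g i := by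
  have hCg := hg.mul_left C
  have hfs := hCg.of_nonneg_of_le hf hfg
  exact ⟨hfs, (hfs.tsum_le_tsum hfg hCg).trans_eq tsum_mul_left⟩

/-- Continuity of the transparent boundary operator
`R : H_t^{-1/2}(div,Γ_b) → H_t^{-1/2}(curl,Γ_b)`: a uniform modewise bound
`(1+|αₙ|²)^{−1/2}(|R̂ₙ|² + |αₙ×R̂ₙ|²) ≤ C(1+|αₙ|²)^{−1/2}(|Ẽₙ|² + |αₙ·Ẽₙ|²)`, and
consequently summable input sequences map boundedly to summable output sequences. -/
theorem R_symbol_bound_and_continuity (k : ℝ) (hk : 0 < k) (α : ℝ × ℝ)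
    (hwood : ∀ n : ℤ × ℤ, alphaNorm α n ≠ k) :
    ∃ C : ℝ, 0 < C ∧
      (∀ (n : ℤ × ℤ) (En : Fin 3 → ℂ), En 2 = 0 →
        sw α n * (enormSq (Rsymb k α n En) + enormSq (ccross (alphaVec α n) (Rsymb k α n En)))
          ≤ C * (sw α n * (enormSq En + ‖cdot (alphaVec α n) En‖^2))) ∧
      (∀ Et : ℤ × ℤ → Fin 3 → ℂ, (∀ n, Et n 2 = 0) →
        (Summable fun n : ℤ × ℤ =>
          sw α n * (enormSq (Et n) + ‖cdot (alphaVec α n) (Et n)‖^2)) →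
        (Summable fun n : ℤ × ℤ =>
          sw α n * (enormSq (Rsymb k α n (Et n))
            + enormSq (ccross (alphaVec α n) (Rsymb k α n (Et n))))) ∧
        (∑' n : ℤ × ℤ, sw α n * (enormSq (Rsymb k α n (Et n))
            + enormSq (ccross (alphaVec α n) (Rsymb k α n (Et n)))))
          ≤ C * ∑' n : ℤ × ℤ,
              sw α n * (enormSq (Et n) + ‖cdot (alphaVec α n) (Et n)‖^2)) := by
  obtain ⟨M, hM, hMβ⟩ := exists_one_add_alphaNorm_sq_le_mul_norm_betaN_sq hk hwood
  have hpoint : ∀ (n : ℤ × ℤ) (En : Fin 3 → ℂ), En 2 = 0 →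
      sw α n * (enormSq (Rsymb k α n En) + enormSq (ccross (alphaVec α n) (Rsymb k α n En)))
        ≤ M * (2 * k ^ 4 + 2) * (sw α n * (enormSq En + ‖cdot (alphaVec α n) En‖ ^ 2)) :=
    fun n En hE => (mul_le_mul_of_nonneg_left
      (enormSq_Rsymb_add_enormSq_ccross_le (betaN_ne_zero hk (hwood n)) (hMβ n) hE)
      (sw_nonneg α n)).trans_eq (by ring)
  refine ⟨M * (2 * k ^ 4 + 2), by positivity, hpoint, fun Et hEt hsum => ?_⟩
  exact summable_and_tsum_le_mul_of_le
    (fun n => mul_nonneg (sw_nonneg α n) (add_nonneg (enormSq_nonneg _) (enormSq_nonneg _)))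
    (fun n => hpoint n (Et n) (hEt n)) hsum
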